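/- arXiv:2205.07644 — 4 statements merged into one kernel-verified Lean document; each statement's English description precedes it below -/
import Mathlib

section
/- Let C be an additive category, F a class of morphisms satisfying condition (M0) (contains all isomorphisms, closed under composition and finite direct sums), N_F the associated subcategory, p : C → C/[N_F] the ideal quotient, and suppose f, g : A → B satisfy p(f) = p(g). Then f ∈ F if and only if g ∈ F. -/
open CategoryTheory CategoryTheory.Limits ZeroObject

universe v u

variable {C : Type u} [Category.{v} C] [Preadditive C] [HasZeroObject C]
  [HasFiniteBiproducts C] [HasBinaryBiproducts C]

/-- A morphism factors through an object of the class `N`. -/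
def FactorsThrough (N : Set C) {X Y : C} (f : X ⟶ Y) : Prop :=
  ∃ Z ∈ N, ∃ (u : X ⟶ Z) (v : Z ⟶ Y), f = u ≫ v

/-- The hom relation identifying two morphisms whose difference lies in the
ideal `[N]` of morphisms factoring through an object of `N`. -/
def idealRel (N : Set C) : HomRel C := fun _ _ f g => FactorsThrough N (f - g)

/-- The full subcategory `N_F` of objects `N` such that both `N ⟶ 0` and
`0 ⟶ N` belong to `F`. -/
def NF (F : MorphismProperty C) : Set C :=
  {N : C | F (0 : N ⟶ (0 : C)) ∧ F (0 : (0 : C) ⟶ N)}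

/-- Condition (M0): `F` contains all isomorphisms, is closed under composition
and closed under finite direct sums of morphisms. -/
def M0 (F : MorphismProperty C) : Prop :=
  (∀ {X Y : C} (f : X ⟶ Y), IsIso f → F f) ∧
  (∀ {X Y Z : C} (f : X ⟶ Y) (g : Y ⟶ Z), F f → F g → F (f ≫ g)) ∧
  (∀ {X₁ Y₁ X₂ Y₂ : C} (f₁ : X₁ ⟶ Y₁) (f₂ : X₂ ⟶ Y₂), F f₁ → F f₂ →
    F (biprod.map f₁ f₂))

/-- The class `F̄` of morphisms of the ideal quotient `C/[N_F]` obtained from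
the image of `F` by closing under pre- and post-composition with isomorphisms. -/
def Fbar (F : MorphismProperty C) :
    MorphismProperty (CategoryTheory.Quotient (idealRel (NF F))) :=
  fun X Y h => ∃ (A B : C)
    (e₁ : X ⟶ (CategoryTheory.Quotient.functor (idealRel (NF F))).obj A)
    (e₂ : (CategoryTheory.Quotient.functor (idealRel (NF F))).obj B ⟶ Y)
    (f : A ⟶ B), IsIso e₁ ∧ IsIso e₂ ∧ F f ∧
      h = e₁ ≫ (CategoryTheory.Quotient.functor (idealRel (NF F))).map f ≫ e₂

/-- 2-out-of-3 property for a class of morphisms. -/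
def TwoOutOfThree {D : Type*} [Category D] (S : MorphismProperty D) : Prop :=
  (∀ {X Y Z : D} (f : X ⟶ Y) (g : Y ⟶ Z), S f → S g → S (f ≫ g)) ∧
  (∀ {X Y Z : D} (f : X ⟶ Y) (g : Y ⟶ Z), S f → S (f ≫ g) → S g) ∧
  (∀ {X Y Z : D} (f : X ⟶ Y) (g : Y ⟶ Z), S g → S (f ≫ g) → S f)

/-!
If `f - g = u ≫ v` with `u : A ⟶ Z`, `v : Z ⟶ B` and `Z ∈ N_F`, then `g` is the composite
`A ⟶ A ⊞ Z ⟶ B ⊞ Z ⟶ B` of `biprod.lift (𝟙 A) u`, `f ⊞ 𝟙 Z` and `biprod.desc (𝟙 B) (-v)`.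
The middle map lies in `F` when `f` does. The outer maps are a shear isomorphism composed with
`biprod.inl`, resp. `biprod.fst`, and these lie in `F` because, up to `A ≅ A ⊞ 0`, they are the
direct sums `𝟙 A ⊞ (0 ⟶ Z)` and `𝟙 B ⊞ (Z ⟶ 0)`.
-/

namespace M0

variable {F : MorphismProperty C} (hF : M0 F) {Z : C} (hZ : Z ∈ NF F)
include hF hZ
omit [HasFiniteBiproducts C]

theorem inl_mem (A : C) : F (biprod.inl : A ⟶ A ⊞ Z) := by
  have h : (biprod.inl : A ⟶ A ⊞ Z) =
      (isoBiprodZero (isZero_zero C)).hom ≫ biprod.map (𝟙 A) (0 : 0 ⟶ Z) := by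
    simp
  rw [h]
  exact hF.2.1 _ _ (hF.1 _ inferInstance) (hF.2.2 _ _ (hF.1 _ inferInstance) hZ.2)

theorem fst_mem (B : C) : F (biprod.fst : B ⊞ Z ⟶ B) := by
  have h : (biprod.fst : B ⊞ Z ⟶ B) =
      biprod.map (𝟙 B) (0 : Z ⟶ 0) ≫ (isoBiprodZero (isZero_zero C)).inv := by
    simp
  rw [h]
  exact hF.2.1 _ _ (hF.2.2 _ _ (hF.1 _ inferInstance) hZ.1) (hF.1 _ inferInstance)

theorem lift_id_mem {A : C} (u : A ⟶ Z) : F (biprod.lift (𝟙 A) u) := by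
  have h : biprod.lift (𝟙 A) u = biprod.inl ≫ (Biprod.unipotentUpper u).hom := by
    ext <;> simp [Biprod.ofComponents]
  rw [h]
  exact hF.2.1 _ _ (hF.inl_mem hZ A) (hF.1 _ inferInstance)

theorem desc_id_mem {B : C} (v : Z ⟶ B) : F (biprod.desc (𝟙 B) v) := by
  have h : biprod.desc (𝟙 B) v = (Biprod.unipotentLower v).hom ≫ biprod.fst := by
    ext <;> simp [Biprod.ofComponents]
  rw [h]
  exact hF.2.1 _ _ (hF.1 _ inferInstance) (hF.fst_mem hZ B)

theorem add_comp_mem {A B : C} {f : A ⟶ B} (hf : F f) (u : A ⟶ Z) (v : Z ⟶ B) :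
    F (f + u ≫ v) := by
  have h : f + u ≫ v = biprod.lift (𝟙 A) u ≫ biprod.map f (𝟙 Z) ≫ biprod.desc (𝟙 B) v := by
    simp [biprod.lift_eq, Preadditive.add_comp]
  rw [h]
  exact hF.2.1 _ _ (hF.lift_id_mem hZ u)
    (hF.2.1 _ _ (hF.2.2 _ _ hf (hF.1 _ inferInstance)) (hF.desc_id_mem hZ v))

end M0

/-- Let `F` satisfy condition (M0).  If two morphisms `f, g : A ⟶ B` have the
same image under the ideal quotient functor `p : C ⟶ C/[N_F]` (i.e. `f - g`
factors through an object of `N_F`), then `f ∈ F` if and only if `g ∈ F`. -/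
theorem mem_F_iff_of_idealRel (F : MorphismProperty C) (hM0 : M0 F)
    {A B : C} (f g : A ⟶ B) (h : idealRel (NF F) f g) :
    F f ↔ F g := by
  obtain ⟨Z, hZ, u, v, huv⟩ := h
  have hg : g = f + u ≫ (-v) := by rw [Preadditive.comp_neg, ← huv]; abel
  have hf : f = g + u ≫ v := by rw [← huv]; abel
  exact ⟨fun hfF => hg ▸ hM0.add_comp_mem hZ hfF u (-v),
    fun hgF => hf ▸ hM0.add_comp_mem hZ hgF u v⟩
end

section
/- With C, F, N_F, p as above, the following are equivalent: (i) p(F) equals the closure F̄ of p(F) under composition with isomorphisms of C/[N_F]; (ii) p⁻¹(F̄) = F; (iii) p⁻¹(Iso(C/[N_F])) ⊆ F; (iv) every split monomorphism f in C whose image p(f) is an isomorphism in C/[N_F] belongs to F; (v) every split epimorphism f in C whose image p(f) is an isomorphism belongs to F. -/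
/-!
Because `N_F` contains `0` and is closed under `⊞`, the morphisms factoring through `N_F` form an
ideal, and `F` is saturated for it: if `f - g = u ≫ v` through `N ∈ N_F` and `F g`, then `f` is
the composite of `inl : X ⟶ X ⊞ N`, a unipotent shear, `g ⊞ 𝟙 N`, a second shear and `fst`, all of
which lie in `F`. Hence `p⁻¹(p(F)) = F`, from which (i) ⇔ (ii) ⇔ (iii) are formal.
For (iv) ⇒ (iii), let `p g` be inverse to `p f` and write `f ≫ g - 𝟙 = u ≫ v` through `N ∈ N_F`.
Then `(f, u) : X ⟶ Y ⊞ N` is a split mono with retraction `(g, -v)`, its image `p f ≫ p inl` is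
an isomorphism, and `f = (f, u) ≫ fst`. The implication (v) ⇒ (iii) is dual.
-/

open CategoryTheory CategoryTheory.Limits ZeroObject

universe v u

variable {C : Type u} [Category.{v} C] [Preadditive C] [HasZeroObject C]
  [HasFiniteBiproducts C] [HasBinaryBiproducts C]

section

omit [HasFiniteBiproducts C]

variable {F : MorphismProperty C}

section

omit [HasZeroObject C]

lemma FactorsThrough.add {N : Set C} (hN : ∀ A ∈ N, ∀ B ∈ N, (A ⊞ B) ∈ N) {X Y : C}
    {f g : X ⟶ Y} (hf : FactorsThrough N f) (hg : FactorsThrough N g) :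
    FactorsThrough N (f + g) := by
  obtain ⟨Z, hZ, u, v, rfl⟩ := hf
  obtain ⟨Z', hZ', u', v', rfl⟩ := hg
  exact ⟨Z ⊞ Z', hN Z hZ Z' hZ', biprod.lift u u', biprod.desc v v', by simp⟩

lemma congruence_idealRel {N : Set C} {Z : C} (hZ : Z ∈ N)
    (hN : ∀ A ∈ N, ∀ B ∈ N, (A ⊞ B) ∈ N) : Congruence (idealRel N) where
  equivalence :=
    { refl := fun _ => ⟨Z, hZ, 0, 0, by simp⟩
      symm := fun ⟨W, hW, u, v, huv⟩ => ⟨W, hW, -u, v, by simp [← huv]⟩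
      trans := fun h₁ h₂ => by simpa [idealRel] using h₁.add hN h₂ }
  comp_left f _ _ := fun ⟨W, hW, u, v, huv⟩ =>
    ⟨W, hW, f ≫ u, v, by simp [← Preadditive.comp_sub, huv]⟩
  comp_right g := fun ⟨W, hW, u, v, huv⟩ =>
    ⟨W, hW, u, v ≫ g, by simp [← Preadditive.sub_comp, huv]⟩

namespace M0

variable (hF : M0 F)
include hF

lemma of_isIso {X Y : C} {f : X ⟶ Y} (hf : IsIso f) : F f := hF.1 f hf

lemma id_mem (X : C) : F (𝟙 X) := hF.of_isIso inferInstance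

lemma comp {X Y Z : C} {f : X ⟶ Y} {g : Y ⟶ Z} (hf : F f) (hg : F g) : F (f ≫ g) :=
  hF.2.1 f g hf hg

lemma biprod_map {X₁ Y₁ X₂ Y₂ : C} {f₁ : X₁ ⟶ Y₁} {f₂ : X₂ ⟶ Y₂} (hf₁ : F f₁) (hf₂ : F f₂) :
    F (biprod.map f₁ f₂) :=
  hF.2.2 f₁ f₂ hf₁ hf₂

end M0

end

local notation "p" => CategoryTheory.Quotient.functor (idealRel (NF F))

section

omit [HasBinaryBiproducts C]

lemma Fbar_map_of_mem {X Y : C} {f : X ⟶ Y} (hf : F f) : Fbar F ((p).map f) :=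
  ⟨X, Y, 𝟙 _, 𝟙 _, f, inferInstance, inferInstance, hf, by simp⟩

variable (F) in
/-- The class `p(F)` of item (i); objects of the quotient are only propositionally of the
form `p A`, whence the `eqToHom`s. -/
def quotientImage : MorphismProperty (Quotient (idealRel (NF F))) :=
  fun X Y h => ∃ (A B : C) (hA : X = (p).obj A) (hB : (p).obj B = Y) (f : A ⟶ B), F f ∧
    h = eqToHom hA ≫ (p).map f ≫ eqToHom hB

lemma quotientImage_map_iff {X Y : C} (h : (p).obj X ⟶ (p).obj Y) :
    quotientImage F h ↔ ∃ f : X ⟶ Y, F f ∧ (p).map f = h := by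
  constructor
  · rintro ⟨A, B, hA, hB, f, hf, rfl⟩
    obtain rfl : X = A := congrArg Quotient.as hA
    obtain rfl : B = Y := congrArg Quotient.as hB
    exact ⟨f, hf, by simp⟩
  · rintro ⟨f, hf, rfl⟩
    exact ⟨X, Y, rfl, rfl, f, hf, by simp⟩

lemma quotientImage_eq_of_Fbar_map_iff (h : ∀ {X Y : C} (f : X ⟶ Y), Fbar F ((p).map f) ↔ F f) :
    quotientImage F = Fbar F := by
  refine le_antisymm ?_ ?_
  · rintro _ _ _ ⟨A, B, hA, hB, f, hf, hh⟩
    exact ⟨A, B, eqToHom hA, eqToHom hB, f, inferInstance, inferInstance, hf, hh⟩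
  · intro X Y g hg
    obtain ⟨f, rfl⟩ := (p).map_surjective (X := X.as) (Y := Y.as) g
    exact (quotientImage_map_iff _).2 ⟨f, (h f).1 hg, rfl⟩

end

lemma isIso_map_inl {X N : C} (hN : N ∈ NF F) : IsIso ((p).map (biprod.inl : X ⟶ X ⊞ N)) := by
  refine ⟨(p).map biprod.fst, by simp [← Functor.map_comp], ?_⟩
  rw [← Functor.map_comp, ← CategoryTheory.Functor.map_id]
  exact CategoryTheory.Quotient.sound _ ⟨N, hN, -biprod.snd, biprod.inr, by ext <;> simp⟩

lemma isIso_map_fst {X N : C} (hN : N ∈ NF F) : IsIso ((p).map (biprod.fst : X ⊞ N ⟶ X)) := by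
  refine ⟨(p).map biprod.inl, ?_, by simp [← Functor.map_comp]⟩
  rw [← Functor.map_comp, ← CategoryTheory.Functor.map_id]
  exact CategoryTheory.Quotient.sound _ ⟨N, hN, -biprod.snd, biprod.inr, by ext <;> simp⟩

namespace M0

variable (hF : M0 F)
include hF

lemma zero_mem_NF : (0 : C) ∈ NF F :=
  ⟨hF.of_isIso ((isZero_zero C).isIso (isZero_zero C) _),
    hF.of_isIso ((isZero_zero C).isIso (isZero_zero C) _)⟩

lemma biprod_mem_NF {N₁ N₂ : C} (h₁ : N₁ ∈ NF F) (h₂ : N₂ ∈ NF F) : (N₁ ⊞ N₂) ∈ NF F := by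
  have hZ : IsZero ((0 : C) ⊞ (0 : C)) := by simp [isZero_zero]
  constructor
  · rw [(isZero_zero C).eq_of_tgt 0 (biprod.map 0 0 ≫ biprod.fst)]
    exact hF.comp (hF.biprod_map h₁.1 h₂.1) (hF.of_isIso (hZ.isIso (isZero_zero C) _))
  · rw [(isZero_zero C).eq_of_src 0 (biprod.inl ≫ biprod.map 0 0)]
    exact hF.comp (hF.of_isIso ((isZero_zero C).isIso hZ _)) (hF.biprod_map h₁.2 h₂.2)

lemma congruence_idealRel_NF : Congruence (idealRel (NF F)) :=
  congruence_idealRel hF.zero_mem_NF fun _ hA _ hB => hF.biprod_mem_NF hA hB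

lemma inl_mem_s3 {X N : C} (hN : N ∈ NF F) : F (biprod.inl : X ⟶ X ⊞ N) := by
  rw [show (biprod.inl : X ⟶ X ⊞ N) = biprod.inl ≫ biprod.map (𝟙 X) (0 : (0 : C) ⟶ N) by simp]
  exact hF.comp (hF.of_isIso (isoBiprodZero (isZero_zero C)).isIso_hom)
    (hF.biprod_map (hF.id_mem X) hN.2)

lemma fst_mem_s3 {X N : C} (hN : N ∈ NF F) : F (biprod.fst : X ⊞ N ⟶ X) := by
  rw [show (biprod.fst : X ⊞ N ⟶ X) = biprod.map (𝟙 X) (0 : N ⟶ (0 : C)) ≫ biprod.fst by simp]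
  exact hF.comp (hF.biprod_map (hF.id_mem X) hN.1)
    (hF.of_isIso (isoBiprodZero (isZero_zero C)).isIso_inv)

lemma mem_of_idealRel {X Y : C} {f g : X ⟶ Y} (h : idealRel (NF F) f g) (hg : F g) : F f := by
  obtain ⟨N, hN, u, v, huv⟩ := h
  have hf : f = biprod.inl ≫ (Biprod.unipotentUpper u).hom ≫ biprod.map g (𝟙 N) ≫
      (Biprod.unipotentLower v).hom ≫ biprod.fst := by
    rw [← sub_add_cancel f g, huv]
    simp [Biprod.ofComponents, add_comm]
  rw [hf]
  exact hF.comp (hF.inl_mem_s3 hN) <| hF.comp (hF.of_isIso inferInstance) <|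
    hF.comp (hF.biprod_map hg (hF.id_mem N)) <| hF.comp (hF.of_isIso inferInstance) (hF.fst_mem_s3 hN)

lemma map_eq_map_iff {X Y : C} {f g : X ⟶ Y} : (p).map f = (p).map g ↔ idealRel (NF F) f g :=
  have := hF.congruence_idealRel_NF
  Quotient.functor_map_eq_iff _ f g

lemma exists_inv_of_isIso_map {X Y : C} {f : X ⟶ Y} (hf : IsIso ((p).map f)) :
    ∃ g : Y ⟶ X, idealRel (NF F) (f ≫ g) (𝟙 X) ∧ idealRel (NF F) (g ≫ f) (𝟙 Y) := by
  obtain ⟨g, hg⟩ := (p).map_surjective (inv ((p).map f))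
  exact ⟨g, hF.map_eq_map_iff.1 (by simp [hg]), hF.map_eq_map_iff.1 (by simp [hg])⟩

lemma mem_of_isIso_map_of_splitMono
    (hmono : ∀ {X Y : C} (f : X ⟶ Y), IsSplitMono f → IsIso ((p).map f) → F f)
    {X Y : C} (f : X ⟶ Y) (hf : IsIso ((p).map f)) : F f := by
  obtain ⟨g, ⟨N, hN, u, v, huv⟩, -⟩ := hF.exists_inv_of_isIso_map hf
  have hs : IsSplitMono (biprod.lift f u) := IsSplitMono.mk' ⟨biprod.desc g (-v), by
    simp [← huv]⟩
  have hps : (p).map (biprod.lift f u) = (p).map f ≫ (p).map biprod.inl := by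
    rw [← Functor.map_comp]
    exact CategoryTheory.Quotient.sound _ ⟨N, hN, u, biprod.inr, by ext <;> simp⟩
  have : IsIso ((p).map (biprod.lift f u)) := by
    rw [hps]
    have := isIso_map_inl (X := Y) hN
    infer_instance
  rw [← biprod.lift_fst f u]
  exact hF.comp (hmono _ hs this) (hF.fst_mem_s3 hN)

lemma mem_of_isIso_map_of_splitEpi
    (hepi : ∀ {X Y : C} (f : X ⟶ Y), IsSplitEpi f → IsIso ((p).map f) → F f)
    {X Y : C} (f : X ⟶ Y) (hf : IsIso ((p).map f)) : F f := by
  obtain ⟨g, -, ⟨N, hN, u, v, huv⟩⟩ := hF.exists_inv_of_isIso_map hf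
  have hr : IsSplitEpi (biprod.desc f v) := IsSplitEpi.mk' ⟨biprod.lift g (-u), by
    simp [← huv]⟩
  have hpr : (p).map (biprod.desc f v) = (p).map biprod.fst ≫ (p).map f := by
    rw [← Functor.map_comp]
    exact CategoryTheory.Quotient.sound _ ⟨N, hN, biprod.snd, v, by ext <;> simp⟩
  have : IsIso ((p).map (biprod.desc f v)) := by
    rw [hpr]
    have := isIso_map_fst (X := X) hN
    infer_instance
  rw [← biprod.inl_desc f v]
  exact hF.comp (hF.inl_mem_s3 hN) (hepi _ hr this)

lemma Fbar_map_iff_of_quotientImage_eq (h : quotientImage F = Fbar F) {X Y : C} (f : X ⟶ Y) :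
    Fbar F ((p).map f) ↔ F f := by
  rw [← h, quotientImage_map_iff]
  exact ⟨fun ⟨g, hg, hgf⟩ => hF.mem_of_idealRel (hF.map_eq_map_iff.1 hgf.symm) hg,
    fun hf => ⟨f, hf, rfl⟩⟩

lemma Fbar_map_of_isIso {X Y : C} {f : X ⟶ Y} (hf : IsIso ((p).map f)) : Fbar F ((p).map f) :=
  ⟨X, X, 𝟙 _, (p).map f, 𝟙 X, inferInstance, hf, hF.id_mem X, by simp⟩

lemma mem_of_Fbar_map (hiso : ∀ {X Y : C} (f : X ⟶ Y), IsIso ((p).map f) → F f)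
    {X Y : C} {f : X ⟶ Y} (hf : Fbar F ((p).map f)) : F f := by
  obtain ⟨A, B, e₁, e₂, g, he₁, he₂, hg, hfg⟩ := hf
  obtain ⟨a, rfl⟩ := (p).map_surjective e₁
  obtain ⟨b, rfl⟩ := (p).map_surjective e₂
  refine hF.mem_of_idealRel (g := a ≫ g ≫ b) (hF.map_eq_map_iff.1 (by simp [hfg])) ?_
  exact hF.comp (hiso a he₁) (hF.comp hg (hiso b he₂))

end M0

end

/-- For `F` satisfying (M0), with `p : C ⟶ C/[N_F]` the ideal quotient functor
and `F̄` the isomorphism-closure of `p(F)`, the following are equivalent: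
(i) `p(F) = F̄`; (ii) `p⁻¹(F̄) = F`; (iii) `p⁻¹(Iso(C/[N_F])) ⊆ F`;
(iv) every split monomorphism whose image under `p` is an isomorphism lies in
`F`; (v) every split epimorphism whose image under `p` is an isomorphism lies
in `F`. -/
theorem F_saturation_tfae (F : MorphismProperty C) (hM0 : M0 F) :
    List.TFAE
      [ (fun X Y (h : X ⟶ Y) => ∃ (A B : C)
          (hA : X = (CategoryTheory.Quotient.functor (idealRel (NF F))).obj A)
          (hB : (CategoryTheory.Quotient.functor (idealRel (NF F))).obj B = Y)
          (f : A ⟶ B), F f ∧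
            h = eqToHom hA ≫
              (CategoryTheory.Quotient.functor (idealRel (NF F))).map f ≫ eqToHom hB :
          MorphismProperty (CategoryTheory.Quotient (idealRel (NF F)))) = Fbar F,
        ∀ {X Y : C} (f : X ⟶ Y),
          Fbar F ((CategoryTheory.Quotient.functor (idealRel (NF F))).map f) ↔ F f,
        ∀ {X Y : C} (f : X ⟶ Y),
          IsIso ((CategoryTheory.Quotient.functor (idealRel (NF F))).map f) → F f,
        ∀ {X Y : C} (f : X ⟶ Y), IsSplitMono f →
          IsIso ((CategoryTheory.Quotient.functor (idealRel (NF F))).map f) → F f,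
        ∀ {X Y : C} (f : X ⟶ Y), IsSplitEpi f →
          IsIso ((CategoryTheory.Quotient.functor (idealRel (NF F))).map f) → F f ] := by
  tfae_have 1 → 2 := hM0.Fbar_map_iff_of_quotientImage_eq
  tfae_have 2 → 1 := quotientImage_eq_of_Fbar_map_iff
  tfae_have 2 → 3 := fun h _ _ f hf => (h f).1 (hM0.Fbar_map_of_isIso hf)
  tfae_have 3 → 2 := fun h _ _ f => ⟨hM0.mem_of_Fbar_map h, Fbar_map_of_mem⟩
  tfae_have 3 → 4 := fun h _ _ f _ => h f
  tfae_have 3 → 5 := fun h _ _ f _ => h f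
  tfae_have 4 → 3 := hM0.mem_of_isIso_map_of_splitMono
  tfae_have 5 → 3 := hM0.mem_of_isIso_map_of_splitEpi
  tfae_finish
end

section
/- Let (C, E, s) be a weakly n-exangulated category (satisfying (C1), (C2), (C2'), (C3), (C3')). Then axiom (R0) is automatic: for any morphism of extensions (a, c) : δ → ρ with s(δ) = [X•] and s(ρ) = [Y•], there exists a lift f• = (a, f₁, …, f_n, c) : X• → Y•, i.e., a chain map from X• to Y• whose first component is a and last component is c, satisfying a_*δ = c*ρ compatibility. -/
open CategoryTheory CategoryTheory.Limits ZeroObject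

universe v u

variable {C : Type u} [Category.{v} C] [Preadditive C] [HasZeroObject C]
  [HasFiniteBiproducts C] [HasBinaryBiproducts C]

/-- An additive bifunctor `E : Cᵒᵖ × C ⥤ Ab`, given by its action on objects
(valued in abelian groups), pushforward along morphisms in the covariant (second)
variable and pullback along morphisms in the contravariant (first) variable. -/
structure AddBifunctor (C : Type u) [Category.{v} C] [Preadditive C] where
  E : C → C → AddCommGrpCat.{v}
  push : ∀ {Z X X' : C}, (X ⟶ X') → E Z X → E Z X'
  pull : ∀ {Z' Z X : C}, (Z' ⟶ Z) → E Z X → E Z' X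
  push_id : ∀ {Z X : C} (δ : E Z X), push (𝟙 X) δ = δ
  push_comp : ∀ {Z X X' X'' : C} (f : X ⟶ X') (g : X' ⟶ X'') (δ : E Z X),
      push (f ≫ g) δ = push g (push f δ)
  pull_id : ∀ {Z X : C} (δ : E Z X), pull (𝟙 Z) δ = δ
  pull_comp : ∀ {Z'' Z' Z X : C} (g : Z'' ⟶ Z') (f : Z' ⟶ Z) (δ : E Z X),
      pull (g ≫ f) δ = pull g (pull f δ)
  pull_push : ∀ {Z' Z X X' : C} (c : Z' ⟶ Z) (a : X ⟶ X') (δ : E Z X),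
      pull c (push a δ) = push a (pull c δ)
  push_add : ∀ {Z X X' : C} (a : X ⟶ X') (δ δ' : E Z X),
      push a (δ + δ') = push a δ + push a δ'
  pull_add : ∀ {Z' Z X : C} (c : Z' ⟶ Z) (δ δ' : E Z X),
      pull c (δ + δ') = pull c δ + pull c δ'
  push_add_hom : ∀ {Z X X' : C} (a a' : X ⟶ X') (δ : E Z X),
      push (a + a') δ = push a δ + push a' δ
  pull_add_hom : ∀ {Z' Z X : C} (c c' : Z' ⟶ Z) (δ : E Z X),
      pull (c + c') δ = pull c δ + pull c' δ

/-- A skeleton of the notion of a (weakly) `n`-exangulated category of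
Herschend–Liu–Nakaoka: an additive bifunctor `E` together with a class of
distinguished `n`-exangles `⟨X•, δ⟩` (an `(n+2)`-term complex together with an
extension `δ ∈ E(X_{n+1}, X₀)`), subject to realization, exactness (C1) and
lifting (C3)/(C3') axioms. -/
structure NExangulated (C : Type u) [Category.{v} C] [Preadditive C]
    [HasZeroObject C] [HasFiniteBiproducts C] (n : ℕ) extends AddBifunctor C where
  distinguished : ∀ (X : ComposableArrows C (n + 1)),
      (E (X.obj' (n + 1)) (X.obj' 0) : Type v) → Prop
  realize : ∀ (A B : C) (δ : E B A), ∃ (X : ComposableArrows C (n + 1))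
      (hA : X.obj' 0 = A) (hB : X.obj' (n + 1) = B),
      distinguished X (pull (eqToHom hB) (push (eqToHom hA.symm) δ))
  isComplex : ∀ (X : ComposableArrows C (n + 1)) (δ : E (X.obj' (n + 1)) (X.obj' 0)),
      distinguished X δ → ∀ (i : ℕ) (hi : i + 2 ≤ n + 1),
      X.map' i (i + 1) ≫ X.map' (i + 1) (i + 2) = 0
  push_d0 : ∀ (X : ComposableArrows C (n + 1)) (δ : E (X.obj' (n + 1)) (X.obj' 0)),
      distinguished X δ → push (X.map' 0 1) δ = 0
  pull_dn : ∀ (X : ComposableArrows C (n + 1)) (δ : E (X.obj' (n + 1)) (X.obj' 0)),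
      distinguished X δ → pull (X.map' n (n + 1)) δ = 0
  exact_contra_mid : ∀ (X : ComposableArrows C (n + 1)) (δ : E (X.obj' (n + 1)) (X.obj' 0)),
      distinguished X δ → ∀ (i : ℕ) (hi : i + 2 ≤ n + 1) (Y : C)
      (g : Y ⟶ X.obj' (i + 1)), g ≫ X.map' (i + 1) (i + 2) = 0 →
      ∃ h : Y ⟶ X.obj' i, h ≫ X.map' i (i + 1) = g
  exact_contra_last : ∀ (X : ComposableArrows C (n + 1)) (δ : E (X.obj' (n + 1)) (X.obj' 0)),
      distinguished X δ → ∀ (Y : C) (g : Y ⟶ X.obj' (n + 1)), pull g δ = 0 →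
      ∃ h : Y ⟶ X.obj' n, h ≫ X.map' n (n + 1) = g
  exact_cov_mid : ∀ (X : ComposableArrows C (n + 1)) (δ : E (X.obj' (n + 1)) (X.obj' 0)),
      distinguished X δ → ∀ (i : ℕ) (hi : i + 2 ≤ n + 1) (Y : C)
      (g : X.obj' (i + 1) ⟶ Y), X.map' i (i + 1) ≫ g = 0 →
      ∃ h : X.obj' (i + 2) ⟶ Y, X.map' (i + 1) (i + 2) ≫ h = g
  exact_cov_first : ∀ (X : ComposableArrows C (n + 1)) (δ : E (X.obj' (n + 1)) (X.obj' 0)),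
      distinguished X δ → ∀ (Y : C) (g : X.obj' 0 ⟶ Y), push g δ = 0 →
      ∃ h : X.obj' 1 ⟶ Y, X.map' 0 1 ≫ h = g
  pushLift : ∀ (X : ComposableArrows C (n + 1)) (δ : E (X.obj' (n + 1)) (X.obj' 0))
      (Y : ComposableArrows C (n + 1)) (ρ : E (Y.obj' (n + 1)) (Y.obj' 0)),
      distinguished X δ → distinguished Y ρ →
      ∀ (a : X.obj' 0 ⟶ Y.obj' 0) (hC : X.obj' (n + 1) = Y.obj' (n + 1)),
      push a δ = pull (eqToHom hC) ρ →
      ∃ f : X ⟶ Y, f.app ⟨0, by omega⟩ = a ∧ f.app ⟨n + 1, by omega⟩ = eqToHom hC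
  pullLift : ∀ (X : ComposableArrows C (n + 1)) (δ : E (X.obj' (n + 1)) (X.obj' 0))
      (Y : ComposableArrows C (n + 1)) (ρ : E (Y.obj' (n + 1)) (Y.obj' 0)),
      distinguished X δ → distinguished Y ρ →
      ∀ (c : X.obj' (n + 1) ⟶ Y.obj' (n + 1)) (hA : X.obj' 0 = Y.obj' 0),
      push (eqToHom hA) δ = pull c ρ →
      ∃ f : X ⟶ Y, f.app ⟨0, by omega⟩ = eqToHom hA ∧ f.app ⟨n + 1, by omega⟩ = c

/-! Realize `a_* δ` by a distinguished `Z•`. Axiom (C3) lifts `(a, 1)` to `X• ⟶ Z•`, and since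
`a_* δ = c^* ρ`, axiom (C3') lifts `(1, c)` to `Z• ⟶ Y•`; the composite lifts `(a, c)`. -/

namespace NExangulated

omit [HasBinaryBiproducts C]

variable {n : ℕ} (T : NExangulated C n)

theorem exists_lift_to_realization_of_push {X : ComposableArrows C (n + 1)}
    {δ : T.E (X.obj' (n + 1)) (X.obj' 0)} (hX : T.distinguished X δ) {A : C}
    (a : X.obj' 0 ⟶ A) :
    ∃ (Z : ComposableArrows C (n + 1)) (hA : Z.obj' 0 = A) (hB : Z.obj' (n + 1) = X.obj' (n + 1)),
      T.distinguished Z (T.pull (eqToHom hB) (T.push (eqToHom hA.symm) (T.push a δ))) ∧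
      ∃ f : X ⟶ Z, f.app ⟨0, by omega⟩ = a ≫ eqToHom hA.symm ∧
        f.app ⟨n + 1, by omega⟩ = eqToHom hB.symm := by
  obtain ⟨Z, hA, hB, hZ⟩ := T.realize A (X.obj' (n + 1)) (T.push a δ)
  refine ⟨Z, hA, hB, hZ, T.pushLift X δ Z _ hX hZ (a ≫ eqToHom hA.symm) hB.symm ?_⟩
  rw [← T.pull_comp, eqToHom_trans, eqToHom_refl, T.pull_id, T.push_comp]

theorem exists_lift_from_realization_of_push {X Y Z : ComposableArrows C (n + 1)}
    {δ : T.E (X.obj' (n + 1)) (X.obj' 0)} {ρ : T.E (Y.obj' (n + 1)) (Y.obj' 0)}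
    (hY : T.distinguished Y ρ) {a : X.obj' 0 ⟶ Y.obj' 0} {c : X.obj' (n + 1) ⟶ Y.obj' (n + 1)}
    (hac : T.push a δ = T.pull c ρ) (hA : Z.obj' 0 = Y.obj' 0)
    (hB : Z.obj' (n + 1) = X.obj' (n + 1))
    (hZ : T.distinguished Z (T.pull (eqToHom hB) (T.push (eqToHom hA.symm) (T.push a δ)))) :
    ∃ g : Z ⟶ Y, g.app ⟨0, by omega⟩ = eqToHom hA ∧
      g.app ⟨n + 1, by omega⟩ = eqToHom hB ≫ c := by
  refine T.pullLift Z _ Y ρ hZ hY (eqToHom hB ≫ c) hA ?_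
  rw [T.pull_push, ← T.push_comp, eqToHom_trans, eqToHom_refl, T.push_id, hac, T.pull_comp]

end NExangulated

/-- In a weakly `n`-exangulated category (here encoded by the axioms of
`NExangulated`, in particular the lifting axioms coming from (C3) and (C3')),
the realization axiom (R0) is automatic: any morphism of extensions
`(a, c) : δ → ρ` between distinguished `n`-exangles admits a lift
`f• = (a, f₁, …, f_n, c)`. -/
theorem R0_automatic {n : ℕ} (T : NExangulated C n)
    (X : ComposableArrows C (n + 1)) (δ : T.E (X.obj' (n + 1)) (X.obj' 0))
    (Y : ComposableArrows C (n + 1)) (ρ : T.E (Y.obj' (n + 1)) (Y.obj' 0))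
    (hX : T.distinguished X δ) (hY : T.distinguished Y ρ)
    (a : X.obj' 0 ⟶ Y.obj' 0) (c : X.obj' (n + 1) ⟶ Y.obj' (n + 1))
    (hac : T.push a δ = T.pull c ρ) :
    ∃ f : X ⟶ Y, f.app ⟨0, by omega⟩ = a ∧ f.app ⟨n + 1, by omega⟩ = c := by
  obtain ⟨Z, hA, hB, hZ, f, hf₀, hfₙ⟩ := T.exists_lift_to_realization_of_push hX a
  obtain ⟨g, hg₀, hgₙ⟩ := T.exists_lift_from_realization_of_push hY hac hA hB hZ
  refine ⟨f ≫ g, ?_, ?_⟩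
  · rw [NatTrans.comp_app, hf₀, hg₀, Category.assoc, eqToHom_trans, eqToHom_refl,
      Category.comp_id]
  · rw [NatTrans.comp_app, hfₙ, hgₙ, ← Category.assoc, eqToHom_trans, eqToHom_refl,
      Category.id_comp]
end

section
/- Let (C, E, s) be an n-exangulated category, F satisfying (M0) with F̄ satisfying (MR1)–(MR3), and Q : C → C̃ the localization at F. Suppose every distinguished n-exangle of C induces a weak kernel–cokernel sequence in C̃. Then for any Ẽ-extension [t \ δ / s] ∈ Ẽ(C, A) realized (via s(δ) = [X₀ → X₁ → ⋯ → X_{n+1}]) by the sequence A → X₁ → ⋯ → X_n → C in C̃ (with first map Q(x₀ ∘ s) and last map Q(t ∘ x_n)), the sequence of functors C̃(−, A) → C̃(−, X₁) → ⋯ → C̃(−, C) → Ẽ(−, A) is exact, where the last map is pullback of [t \ δ / s]. -/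
open CategoryTheory CategoryTheory.Limits ZeroObject

universe v u

variable {C : Type u} [Category.{v} C] [Preadditive C] [HasZeroObject C]
  [HasFiniteBiproducts C] [HasBinaryBiproducts C]

/-- The ideal quotient functor `p : C ⥤ C/[N_F]`. -/
abbrev pFunctor (F : MorphismProperty C) :
    C ⥤ CategoryTheory.Quotient (idealRel (NF F)) :=
  CategoryTheory.Quotient.functor (idealRel (NF F))

/-- `f` is an inflation: it appears as the 0-th differential of some
distinguished `n`-exangle. -/
def NExangulated.Inflation {n : ℕ} (T : NExangulated C n) {A B : C}
    (f : A ⟶ B) : Prop :=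
  ∃ (X : ComposableArrows C (n + 1)) (δ : T.E (X.obj' (n + 1)) (X.obj' 0)),
    T.distinguished X δ ∧ ∃ (hA : X.obj' 0 = A) (hB : X.obj' 1 = B),
      X.map' 0 1 = eqToHom hA ≫ f ≫ eqToHom hB.symm

/-- `f` is a deflation: it appears as the `n`-th differential of some
distinguished `n`-exangle. -/
def NExangulated.Deflation {n : ℕ} (T : NExangulated C n) {A B : C}
    (f : A ⟶ B) : Prop :=
  ∃ (X : ComposableArrows C (n + 1)) (δ : T.E (X.obj' (n + 1)) (X.obj' 0)),
    T.distinguished X δ ∧ ∃ (hA : X.obj' n = A) (hB : X.obj' (n + 1) = B),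
      X.map' n (n + 1) = eqToHom hA ≫ f ≫ eqToHom hB.symm

/-- The WIC condition: if `g ∘ f` is a deflation then so is `g`; if `g ∘ f` is
an inflation then so is `f`. -/
def WIC {n : ℕ} (T : NExangulated C n) : Prop :=
  (∀ {A B C' : C} (f : A ⟶ B) (g : B ⟶ C'), T.Deflation (f ≫ g) → T.Deflation g) ∧
  (∀ {A B C' : C} (f : A ⟶ B) (g : B ⟶ C'), T.Inflation (f ≫ g) → T.Inflation f)

/-- Condition (MR3): given a morphism `(a, c)` of extensions between
distinguished `n`-exangles whose images in `C/[N_F]` lie in `F̄`, there exist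
middle components `bᵢ ∈ F̄` making all squares commute in `C/[N_F]`. -/
def MR3 {n : ℕ} (T : NExangulated C n) (F : MorphismProperty C) : Prop :=
  ∀ (X : ComposableArrows C (n + 1)) (δ : T.E (X.obj' (n + 1)) (X.obj' 0))
    (Y : ComposableArrows C (n + 1)) (ρ : T.E (Y.obj' (n + 1)) (Y.obj' 0)),
    T.distinguished X δ → T.distinguished Y ρ →
    ∀ (a : X.obj' 0 ⟶ Y.obj' 0) (c : X.obj' (n + 1) ⟶ Y.obj' (n + 1)),
    T.push a δ = T.pull c ρ →
    Fbar F ((pFunctor F).map a) → Fbar F ((pFunctor F).map c) →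
    ∃ b : ∀ (i : ℕ) (hi : i ≤ n + 1),
        ((pFunctor F).obj (X.obj' i hi) ⟶ (pFunctor F).obj (Y.obj' i hi)),
      b 0 (by omega) = (pFunctor F).map a ∧
      b (n + 1) (by omega) = (pFunctor F).map c ∧
      (∀ (i : ℕ) (h1 : 1 ≤ i) (h2 : i ≤ n), Fbar F (b i (by omega))) ∧
      (∀ (i : ℕ) (hi : i + 1 ≤ n + 1),
        (pFunctor F).map (X.map' i (i + 1)) ≫ b (i + 1) hi
          = b i (by omega) ≫ (pFunctor F).map (Y.map' i (i + 1)))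

/-- The subfunctor `K ⊆ E` of extensions killed by pushforward along some
morphism of `F`. -/
def Kext {n : ℕ} (T : NExangulated C n) (F : MorphismProperty C)
    {Z X : C} (δ : T.E Z X) : Prop :=
  ∃ (B : C) (s : X ⟶ B), F s ∧ T.push s δ = 0

/-- The localization functor `Q : C ⥤ C̃`, the composite of the ideal quotient
`p : C ⥤ C̄ = C/[N_F]` with the localization of `C̄` at the multiplicative
system `F̄`. -/
noncomputable abbrev LFun (F : MorphismProperty C) :
    C ⥤ (Fbar F).Localization :=
  pFunctor F ⋙ (Fbar F).Q

/-! The first two exactness statements come straight from the weak kernel property of `X` in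
`C̃`, since `Q(s)` is invertible. For the last one, an extension `δ` whose pullback along `g` is
killed by pushing along some `u ∈ F` is compared, via (MR3), with a realization `Z` of `u_* δ`:
in `Z` the morphism `g` lifts through the last differential, and the comparison map at position
`n` lies in `F̄`, hence becomes invertible in `C̃` and transports the lift back to `X`. -/

theorem AddBifunctor.push_zero (T : AddBifunctor C) {Z X X' : C} (a : X ⟶ X') :
    T.push a (0 : T.E Z X) = 0 := by
  simpa using T.push_add a (0 : T.E Z X) 0

theorem Fbar_map_of_mem_s16 (F : MorphismProperty C) {A B : C} {f : A ⟶ B} (hf : F f) :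
    Fbar F ((pFunctor F).map f) :=
  ⟨A, B, 𝟙 _, 𝟙 _, f, inferInstance, inferInstance, hf, by simp⟩

theorem LFun_map_isIso (F : MorphismProperty C) {A B : C} {f : A ⟶ B} (hf : F f) :
    IsIso ((LFun F).map f) :=
  (Fbar F).Q_inverts _ (Fbar_map_of_mem_s16 F hf)

namespace NExangulated

variable {n : ℕ} (T : NExangulated C n) (F : MorphismProperty C)

theorem exists_comp_LFun_map_eq_of_push_pull_eq_zero (hn : 0 < n) (hMR3 : MR3 T F)
    {X : ComposableArrows C (n + 1)} {δ : T.E (X.obj' (n + 1)) (X.obj' 0)}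
    (hX : T.distinguished X δ)
    {Z : ComposableArrows C (n + 1)} {ρ : T.E (Z.obj' (n + 1)) (Z.obj' 0)}
    (hZ : T.distinguished Z ρ)
    {a : X.obj' 0 ⟶ Z.obj' 0} {c : X.obj' (n + 1) ⟶ Z.obj' (n + 1)}
    (hac : T.push a δ = T.pull c ρ) (ha : Fbar F ((pFunctor F).map a))
    (hc : Fbar F ((pFunctor F).map c))
    {Y : C} (g : Y ⟶ X.obj' (n + 1)) (hg : T.push a (T.pull g δ) = 0) :
    ∃ h : (LFun F).obj Y ⟶ (LFun F).obj (X.obj' n),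
      h ≫ (LFun F).map (X.map' n (n + 1)) = (LFun F).map g := by
  obtain ⟨h₀, hh₀⟩ := T.exact_contra_last Z ρ hZ Y (g ≫ c) (by
    rw [T.pull_comp, ← hac, T.pull_push, hg])
  obtain ⟨b, -, hbc, hbF, hsq⟩ := hMR3 X δ Z ρ hX hZ a c hac ha hc
  have : IsIso ((Fbar F).Q.map (b n n.le_succ)) := (Fbar F).Q_inverts _ (hbF n hn le_rfl)
  have : IsIso ((LFun F).map c) := (Fbar F).Q_inverts _ hc
  have hsq' : (LFun F).map (X.map' n (n + 1)) ≫ (LFun F).map c =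
      (Fbar F).Q.map (b n n.le_succ) ≫ (LFun F).map (Z.map' n (n + 1)) := by
    have := congrArg (Fbar F).Q.map (hsq n le_rfl)
    rw [hbc] at this
    simpa using this
  refine ⟨(LFun F).map h₀ ≫ inv ((Fbar F).Q.map (b n n.le_succ)), ?_⟩
  rw [← cancel_mono ((LFun F).map c), Category.assoc, Category.assoc, hsq',
    IsIso.inv_hom_id_assoc, ← Functor.map_comp, hh₀, Functor.map_comp]

theorem exists_comp_LFun_map_eq_of_kext_pull (hn : 0 < n) (hM0 : M0 F) (hMR3 : MR3 T F)
    {X : ComposableArrows C (n + 1)} {δ : T.E (X.obj' (n + 1)) (X.obj' 0)}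
    (hX : T.distinguished X δ) {Y : C} (g : Y ⟶ X.obj' (n + 1))
    (hg : Kext T F (T.pull g δ)) :
    ∃ h : (LFun F).obj Y ⟶ (LFun F).obj (X.obj' n),
      h ≫ (LFun F).map (X.map' n (n + 1)) = (LFun F).map g := by
  obtain ⟨B, u, hu, hug⟩ := hg
  obtain ⟨Z, hZ₀, hZ₁, hZ⟩ := T.realize B (X.obj' (n + 1)) (T.push u δ)
  have hF_eqToHom {A A' : C} (e : A = A') : F (eqToHom e) := hM0.1 _ inferInstance
  refine T.exists_comp_LFun_map_eq_of_push_pull_eq_zero F hn hMR3 hX hZ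
    (a := u ≫ eqToHom hZ₀.symm) (c := eqToHom hZ₁.symm) ?_
    (Fbar_map_of_mem_s16 F (hM0.2.1 _ _ hu (hF_eqToHom _))) (Fbar_map_of_mem_s16 F (hF_eqToHom _)) g ?_
  · rw [← T.pull_comp, eqToHom_trans, eqToHom_refl, T.pull_id, T.push_comp]
  · rw [T.push_comp, hug, T.push_zero]

end NExangulated

/-- The hypothesis on `β` in the last conjunct says that `[t \ δ / s]` pulled back along `β`,
written as the fraction `Q(g)⁻¹ ∘ Q(f ∘ t)`, vanishes in `Ẽ`: after a further `F`-morphism `m`,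
`(m ∘ f)^* δ` lies in the subfunctor `K`. -/
theorem localized_realization_exact {n : ℕ} (hn : 0 < n)
    (T : NExangulated C n)
    (F : MorphismProperty C) (hM0 : M0 F)
    [(Fbar F).HasLeftCalculusOfFractions]
    (hMR3 : MR3 T F)
    [Preadditive (CategoryTheory.Quotient (idealRel (NF F)))]
    (hWK : ∀ (X : ComposableArrows C (n + 1)) (δ : T.E (X.obj' (n + 1)) (X.obj' 0)),
      T.distinguished X δ →
      (∀ (i : ℕ) (hi : i + 2 ≤ n + 1) (P : C)
        (β : (LFun F).obj P ⟶ (LFun F).obj (X.obj' (i + 1))),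
        β ≫ (LFun F).map (X.map' (i + 1) (i + 2)) = 0 →
        ∃ h : (LFun F).obj P ⟶ (LFun F).obj (X.obj' i),
          h ≫ (LFun F).map (X.map' i (i + 1)) = β) ∧
      (∀ (i : ℕ) (hi : i + 2 ≤ n + 1) (P : C)
        (γ : (LFun F).obj (X.obj' (i + 1)) ⟶ (LFun F).obj P),
        (LFun F).map (X.map' i (i + 1)) ≫ γ = 0 →
        ∃ h : (LFun F).obj (X.obj' (i + 2)) ⟶ (LFun F).obj P,
          (LFun F).map (X.map' (i + 1) (i + 2)) ≫ h = γ))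
    (X : ComposableArrows C (n + 1)) (δ : T.E (X.obj' (n + 1)) (X.obj' 0))
    (hX : T.distinguished X δ)
    (A C₀ : C) (s : A ⟶ X.obj' 0) (hs : F s)
    (t : X.obj' (n + 1) ⟶ C₀) :
    (∀ (P : C) (β : (LFun F).obj P ⟶ (LFun F).obj (X.obj' 1)),
      β ≫ (LFun F).map (X.map' 1 2 (by omega) (by omega)) = 0 →
      ∃ h : (LFun F).obj P ⟶ (LFun F).obj A,
        h ≫ (LFun F).map (s ≫ X.map' 0 1) = β) ∧
    (∀ (i : ℕ) (h1 : 1 ≤ i) (hi : i + 2 ≤ n + 1) (P : C)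
      (β : (LFun F).obj P ⟶ (LFun F).obj (X.obj' (i + 1))),
      β ≫ (LFun F).map (X.map' (i + 1) (i + 2)) = 0 →
      ∃ h : (LFun F).obj P ⟶ (LFun F).obj (X.obj' i),
        h ≫ (LFun F).map (X.map' i (i + 1)) = β) ∧
    (∀ (P : C) (β : (LFun F).obj P ⟶ (LFun F).obj C₀),
      (∃ (P' : C) (g : P' ⟶ P) (f : P' ⟶ X.obj' (n + 1)), F g ∧
        (LFun F).map g ≫ β = (LFun F).map (f ≫ t) ∧
        ∃ (P'' : C) (m : P'' ⟶ P'), F m ∧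
          ∃ (B : C) (u : X.obj' 0 ⟶ B), F u ∧ T.push u (T.pull (m ≫ f) δ) = 0) →
      ∃ h : (LFun F).obj P ⟶ (LFun F).obj (X.obj' n),
        h ≫ (LFun F).map (X.map' n (n + 1) ≫ t) = β) := by
  obtain ⟨hWKc, -⟩ := hWK X δ hX
  refine ⟨?_, fun i _ hi => hWKc i hi, ?_⟩
  · intro P β hβ
    obtain ⟨h, hh⟩ := hWKc 0 (by omega) P β hβ
    have := LFun_map_isIso F hs
    refine ⟨h ≫ inv ((LFun F).map s), ?_⟩
    rw [Functor.map_comp, Category.assoc, IsIso.inv_hom_id_assoc, hh]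
  · rintro P β ⟨P', g, f, hg, hβ, P'', m, hm, hK⟩
    obtain ⟨h, hh⟩ := T.exists_comp_LFun_map_eq_of_kext_pull F hn hM0 hMR3 hX (m ≫ f) hK
    have := LFun_map_isIso F hg
    have := LFun_map_isIso F hm
    refine ⟨inv ((LFun F).map g) ≫ inv ((LFun F).map m) ≫ h, ?_⟩
    rw [Category.assoc, Category.assoc, IsIso.inv_comp_eq, IsIso.inv_comp_eq, hβ,
      Functor.map_comp, ← Category.assoc, hh, ← Functor.map_comp, ← Functor.map_comp,
      Category.assoc]
end
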